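/- The map h(α,β,γ,δ) = (β, β/α, 1/(αγ), (α+1)/(α²δ)) on ℝ₊⁴ is globally 6-periodic: its sixth iterate is the identity on ℝ₊⁴. -/

import Mathlib

/-!
Three steps of `hMap` invert the first three coordinates, and the resulting map `hMapCube` is
an involution of `ℝ₊⁴`; hence `hMap^[6] = hMapCube ∘ hMapCube = id` there.
-/

/-- h(α,β,γ,δ) = (β, β/α, 1/(αγ), (α+1)/(α²δ)). -/
noncomputable def hMap : ℝ × ℝ × ℝ × ℝ → ℝ × ℝ × ℝ × ℝ :=
  fun x =>
    match x with
    | (a, b, c, d) => (b, b / a, 1 / (a * c), (a + 1) / (a ^ 2 * d))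

noncomputable def hMapCube : ℝ × ℝ × ℝ × ℝ → ℝ × ℝ × ℝ × ℝ
  | (a, b, c, d) => (1 / a, 1 / b, 1 / c, (a + 1) * (a + b) / (a * (b + 1) * d))

section

variable {a b c d : ℝ}

theorem hMap_iterate_three (ha : 0 < a) (hb : 0 < b) (hc : c ≠ 0) (hd : d ≠ 0) :
    hMap^[3] (a, b, c, d) = hMapCube (a, b, c, d) := by
  simp only [Function.iterate_succ, Function.iterate_zero, Function.comp_apply, id_eq, hMap,
    hMapCube]
  refine Prod.ext ?_ (Prod.ext ?_ (Prod.ext ?_ ?_)) <;> field_simp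
  ring

theorem hMapCube_hMapCube (ha : 0 < a) (hb : 0 < b) (hd : d ≠ 0) :
    hMapCube (hMapCube (a, b, c, d)) = (a, b, c, d) := by
  simp only [hMapCube]
  refine Prod.ext ?_ (Prod.ext ?_ (Prod.ext ?_ ?_)) <;> field_simp
  ring

end

theorem hMap_six_periodic :
    ∀ x : ℝ × ℝ × ℝ × ℝ,
      0 < x.1 → 0 < x.2.1 → 0 < x.2.2.1 → 0 < x.2.2.2 →
      hMap^[6] x = x := by
  rintro ⟨a, b, c, d⟩ ha hb hc hd
  dsimp only at ha hb hc hd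
  calc hMap^[6] (a, b, c, d) = hMap^[3] (hMapCube (a, b, c, d)) := by
        rw [Function.iterate_add_apply hMap 3 3, hMap_iterate_three ha hb hc.ne' hd.ne']
    _ = hMapCube (hMapCube (a, b, c, d)) :=
        hMap_iterate_three (by positivity) (by positivity) (by positivity) (by positivity)
    _ = (a, b, c, d) := hMapCube_hMapCube ha hb hd.ne'
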